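/- Let f_p, f_q : ℝ^D → ℝ be nonnegative and integrable with finite second moments, number densities n_p, n_q > 0, mean velocities v̄_p, v̄_q, particle masses m_p, m_q > 0, and set ρ_p = m_p n_p, ρ_q = m_q n_q. Let ν_{p,q}, ν_{q,p} > 0 and T, T' > 0 be arbitrary, and for u ∈ ℝ^D let M_{p,q} be the Maxwellian with mass m_p, density n_p, mean u and temperature T, and M_{q,p} the Maxwellian with mass m_q, density n_q, mean u and temperature T'. Then the momentum exchange balance m_p ∫ v · ν_{p,q}(M_{p,q}(v) − f_p(v)) dv + m_q ∫ v · ν_{q,p}(M_{q,p}(v) − f_q(v)) dv = 0 holds if and only if u = (ρ_p ν_{p,q} v̄_p + ρ_q ν_{q,p} v̄_q)/(ρ_p ν_{p,q} + ρ_q ν_{q,p}). -/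

import Mathlib

open MeasureTheory

/-- The Maxwellian distribution with number density `n`, mean velocity `vb`,
temperature `T` and particle mass `m` on `ℝ^D`. -/
noncomputable def maxwellian (D : ℕ) (m n T : ℝ) (vb : EuclideanSpace ℝ (Fin D))
    (v : EuclideanSpace ℝ (Fin D)) : ℝ :=
  n * (m / (2 * Real.pi * T)) ^ ((D : ℝ) / 2) * Real.exp (-(m * ‖v - vb‖ ^ 2) / (2 * T))

/-!
A Maxwellian with density `n` and mean `u` is a translated centred Gaussian whose
normalisation makes its mass `n`; the centred Gaussian is even, so its first moment vanishes and
the Maxwellian carries momentum `n • u`. Hence the momentum exchanged by species `p` is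
`ρ_p ν_{p,q} (u - v̄_p)`, and the balance is a linear equation in `u` with positive
leading coefficient `ρ_p ν_{p,q} + ρ_q ν_{q,p}`.
-/

open Real

lemma mul_exp_neg_mul_sq_le {c : ℝ} (hc : 0 < c) (t : ℝ) :
    t * exp (-c * t ^ 2) ≤ 1 + c⁻¹ := by
  have h_exp_le_one : exp (-c * t ^ 2) ≤ 1 := exp_le_one_iff.mpr (by nlinarith)
  have h_sq_mul_exp_le : t ^ 2 * exp (-c * t ^ 2) ≤ c⁻¹ := by
    rw [neg_mul, exp_neg, ← div_eq_mul_inv, div_le_iff₀ (exp_pos _),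
      inv_mul_eq_div, le_div_iff₀' hc]
    linarith [add_one_le_exp (c * t ^ 2)]
  calc t * exp (-c * t ^ 2) ≤ (1 + t ^ 2) * exp (-c * t ^ 2) := by
        gcongr; nlinarith [sq_nonneg (t - 1)]
    _ ≤ 1 + c⁻¹ := by linarith

section Gaussian

variable {V : Type*} [NormedAddCommGroup V] [InnerProductSpace ℝ V] [FiniteDimensional ℝ V]
  [MeasurableSpace V] [BorelSpace V] {b : ℝ}

lemma integrable_exp_neg_mul_sq_norm (hb : 0 < b) :
    Integrable fun v : V => exp (-b * ‖v‖ ^ 2) := by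
  refine Integrable.of_integral_ne_zero ?_
  rw [GaussianFourier.integral_rexp_neg_mul_sq_norm hb]
  exact (rpow_pos_of_pos (div_pos pi_pos hb) _).ne'

lemma integrable_exp_neg_mul_sq_norm_smul (hb : 0 < b) :
    Integrable fun v : V => exp (-b * ‖v‖ ^ 2) • v := by
  refine ((integrable_exp_neg_mul_sq_norm (V := V) (half_pos hb)).mul_const
    (1 + (b / 2)⁻¹)).mono' (by fun_prop) (.of_forall fun v => ?_)
  have h_split :
      exp (-b * ‖v‖ ^ 2) = exp (-(b / 2) * ‖v‖ ^ 2) * exp (-(b / 2) * ‖v‖ ^ 2) := by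
    rw [← exp_add]; ring_nf
  rw [norm_smul, norm_of_nonneg (exp_pos _).le, h_split, mul_assoc, mul_comm _ ‖v‖]
  gcongr
  exact mul_exp_neg_mul_sq_le (half_pos hb) ‖v‖

lemma integral_exp_neg_mul_sq_norm_smul :
    ∫ v : V, exp (-b * ‖v‖ ^ 2) • v = 0 := by
  have h_odd := integral_neg_eq_self (fun v : V => exp (-b * ‖v‖ ^ 2) • v) volume
  simp only [norm_neg, smul_neg, integral_neg] at h_odd
  have h_two_smul : (2 : ℝ) • ∫ v : V, exp (-b * ‖v‖ ^ 2) • v = 0 := by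
    rw [two_smul]; nth_rw 1 [← h_odd]; exact neg_add_cancel _
  exact (smul_eq_zero.mp h_two_smul).resolve_left two_ne_zero

end Gaussian

section Maxwellian

variable {D : ℕ} {m T : ℝ}

local notation "E" => EuclideanSpace ℝ (Fin D)

lemma maxwellian_eq (n : ℝ) (u v : E) :
    maxwellian D m n T u v =
      n * (m / (2 * π * T)) ^ ((D : ℝ) / 2) * exp (-(m / (2 * T)) * ‖v - u‖ ^ 2) := by
  rw [maxwellian]; congr 2; ring

/-- `(π / (m / (2 * T))) ^ (D / 2)` is the integral of `exp (-(m / (2 * T)) * ‖v‖ ^ 2)`. -/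
lemma maxwellian_normalization (hm : 0 < m) (hT : 0 < T) :
    (m / (2 * π * T)) ^ ((D : ℝ) / 2) * (π / (m / (2 * T))) ^ ((D : ℝ) / 2) = 1 := by
  rw [← mul_rpow (by positivity) (by positivity)]
  have : m / (2 * π * T) * (π / (m / (2 * T))) = 1 := by
    field_simp
  rw [this, one_rpow]

lemma integrable_maxwellian (n : ℝ) (hm : 0 < m) (hT : 0 < T) (u : E) :
    Integrable (maxwellian D m n T u) := by
  simp only [funext (maxwellian_eq n u)]
  exact ((integrable_exp_neg_mul_sq_norm (by positivity)).const_mul _).comp_sub_right u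

lemma integral_maxwellian (n : ℝ) (hm : 0 < m) (hT : 0 < T) (u : E) :
    ∫ v, maxwellian D m n T u v = n := by
  simp only [maxwellian_eq n u]
  rw [integral_sub_right_eq_self (fun w : E => _ * exp (-(m / (2 * T)) * ‖w‖ ^ 2)) u,
    integral_const_mul, GaussianFourier.integral_rexp_neg_mul_sq_norm (by positivity),
    finrank_euclideanSpace_fin, mul_assoc, maxwellian_normalization hm hT, mul_one]

lemma integrable_maxwellian_smul_sub (n : ℝ) (hm : 0 < m) (hT : 0 < T) (u : E) :
    Integrable fun v => maxwellian D m n T u v • (v - u) := by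
  simp only [maxwellian_eq n u, mul_smul]
  exact (((integrable_exp_neg_mul_sq_norm_smul (by positivity)).smul (_ : ℝ)).smul
    (_ : ℝ)).comp_sub_right u

lemma integral_maxwellian_smul_sub (n : ℝ) (u : E) :
    ∫ v, maxwellian D m n T u v • (v - u) = 0 := by
  simp only [maxwellian_eq n u]
  rw [integral_sub_right_eq_self (fun w : E => (_ * exp (-(m / (2 * T)) * ‖w‖ ^ 2)) • w) u]
  simp only [mul_smul, integral_smul, integral_exp_neg_mul_sq_norm_smul, smul_zero]

lemma maxwellian_smul_eq_smul_sub_add (n : ℝ) (u v : E) :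
    maxwellian D m n T u v • v =
      maxwellian D m n T u v • (v - u) + maxwellian D m n T u v • u := by
  rw [← smul_add, sub_add_cancel]

lemma integrable_maxwellian_smul (n : ℝ) (hm : 0 < m) (hT : 0 < T) (u : E) :
    Integrable fun v => maxwellian D m n T u v • v := by
  simp only [maxwellian_smul_eq_smul_sub_add n u]
  exact (integrable_maxwellian_smul_sub n hm hT u).add
    ((integrable_maxwellian n hm hT u).smul_const u)

lemma integral_maxwellian_smul (n : ℝ) (hm : 0 < m) (hT : 0 < T) (u : E) :
    ∫ v, maxwellian D m n T u v • v = n • u := by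
  simp only [maxwellian_smul_eq_smul_sub_add n u]
  rw [integral_add (integrable_maxwellian_smul_sub n hm hT u)
      ((integrable_maxwellian n hm hT u).smul_const u),
    integral_maxwellian_smul_sub, integral_smul_const, integral_maxwellian n hm hT, zero_add]

lemma integral_bgk_momentum_exchange (ν n : ℝ) (hm : 0 < m) (hT : 0 < T) (u vb : E)
    {f : E → ℝ} (hf : Integrable fun v => f v • v) (hvb : n • vb = ∫ v, f v • v) :
    ∫ v, (m * (ν * (maxwellian D m n T u v - f v))) • v = (m * n * ν) • (u - vb) := by
  have h_expand : ∀ v : E, (m * (ν * (maxwellian D m n T u v - f v))) • v =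
      (m * ν) • (maxwellian D m n T u v • v) - (m * ν) • (f v • v) := fun v => by
    rw [← smul_sub, ← sub_smul, smul_smul, mul_assoc]
  simp only [h_expand]
  rw [integral_sub ((integrable_maxwellian_smul n hm hT u).fun_smul _) (hf.fun_smul _),
    integral_smul, integral_smul, integral_maxwellian_smul n hm hT, ← hvb, ← smul_sub,
    ← smul_sub, smul_smul, mul_right_comm]

end Maxwellian

lemma smul_sub_add_smul_sub_eq_zero_iff {K M : Type*} [Field K] [AddCommGroup M]
    [Module K M] {a b : K} (hab : a + b ≠ 0) (u x y : M) :
    a • (u - x) + b • (u - y) = 0 ↔ u = (a + b)⁻¹ • (a • x + b • y) := by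
  have h_collect : a • (u - x) + b • (u - y) = (a + b) • u - (a • x + b • y) := by module
  rw [h_collect, sub_eq_zero, eq_inv_smul_iff₀ hab]

theorem bgk_mixture_velocity_general
    (D : ℕ) (mp mq : ℝ) (hmp : 0 < mp) (hmq : 0 < mq)
    (fp fq : EuclideanSpace ℝ (Fin D) → ℝ)
    (hfp_mom : Integrable (fun v => fp v • v))
    (hfq_mom : Integrable (fun v => fq v • v))
    (np nq : ℝ)
    (hnp : 0 < np) (hnq : 0 < nq)
    (vbp vbq : EuclideanSpace ℝ (Fin D))
    (hvbp : np • vbp = ∫ v, fp v • v) (hvbq : nq • vbq = ∫ v, fq v • v)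
    (ρp ρq : ℝ) (hρp : ρp = mp * np) (hρq : ρq = mq * nq)
    (νpq νqp : ℝ) (hνpq : 0 < νpq) (hνqp : 0 < νqp)
    (T T' : ℝ) (hT : 0 < T) (hT' : 0 < T')
    (u : EuclideanSpace ℝ (Fin D)) :
    (∫ v, (mp * (νpq * (maxwellian D mp np T u v - fp v))) • v)
      + (∫ v, (mq * (νqp * (maxwellian D mq nq T' u v - fq v))) • v) = 0 ↔
    u = (ρp * νpq + ρq * νqp)⁻¹ • ((ρp * νpq) • vbp + (ρq * νqp) • vbq) := by
  have h_coeff_pos : 0 < ρp * νpq + ρq * νqp := by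
    rw [hρp, hρq]; positivity
  rw [integral_bgk_momentum_exchange νpq np hmp hT u vbp hfp_mom hvbp,
    integral_bgk_momentum_exchange νqp nq hmq hT' u vbq hfq_mom hvbq, ← hρp, ← hρq]
  exact smul_sub_add_smul_sub_eq_zero_iff h_coeff_pos.ne' u vbp vbq

/-- The interspecies momentum exchange of the multispecies BGK operator balances
if and only if the common mixture mean velocity `u` is the weighted average
`(ρ_p ν_{p,q} v̄_p + ρ_q ν_{q,p} v̄_q)/(ρ_p ν_{p,q} + ρ_q ν_{q,p})`. -/
theorem bgk_mixture_velocity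
    (D : ℕ) (hD : 1 ≤ D) (mp mq : ℝ) (hmp : 0 < mp) (hmq : 0 < mq)
    (fp fq : EuclideanSpace ℝ (Fin D) → ℝ)
    (hfp_nonneg : ∀ v, 0 ≤ fp v) (hfq_nonneg : ∀ v, 0 ≤ fq v)
    (hfp_int : Integrable fp) (hfq_int : Integrable fq)
    (hfp_mom : Integrable (fun v => fp v • v))
    (hfq_mom : Integrable (fun v => fq v • v))
    (hfp_en : Integrable (fun v => ‖v‖ ^ 2 * fp v))
    (hfq_en : Integrable (fun v => ‖v‖ ^ 2 * fq v))
    (np nq : ℝ) (hnp_def : np = ∫ v, fp v) (hnq_def : nq = ∫ v, fq v)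
    (hnp : 0 < np) (hnq : 0 < nq)
    (vbp vbq : EuclideanSpace ℝ (Fin D))
    (hvbp : np • vbp = ∫ v, fp v • v) (hvbq : nq • vbq = ∫ v, fq v • v)
    (ρp ρq : ℝ) (hρp : ρp = mp * np) (hρq : ρq = mq * nq)
    (νpq νqp : ℝ) (hνpq : 0 < νpq) (hνqp : 0 < νqp)
    (T T' : ℝ) (hT : 0 < T) (hT' : 0 < T')
    (u : EuclideanSpace ℝ (Fin D)) :
    (∫ v, (mp * (νpq * (maxwellian D mp np T u v - fp v))) • v)
      + (∫ v, (mq * (νqp * (maxwellian D mq nq T' u v - fq v))) • v) = 0 ↔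
    u = (ρp * νpq + ρq * νqp)⁻¹ • ((ρp * νpq) • vbp + (ρq * νqp) • vbq) :=
  bgk_mixture_velocity_general D mp mq hmp hmq fp fq hfp_mom hfq_mom np nq hnp hnq vbp vbq hvbp hvbq
    ρp ρq hρp hρq νpq νqp hνpq hνqp T T' hT hT' u
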